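/- Let x^1,…,x^p be surjective maps with x^i ∈ ST_{n_i}^{r_i} indecomposable for every 1 ≤ i ≤ p, and let f ∈ Sh^•(r_1,…,r_p). If there exist surjections y^1,…,y^q such that f∘(x^1×…×x^p) = y^1·y^2·…·y^q, then q ≤ p. -/

import Mathlib

/-!
Write `z = f ∘ (x¹ × ⋯ × xᵖ) = y¹ · ⋯ · y^q`. The maximum of `z` occurs inside every factor `yʲ`,
and since `f` attains its maximum exactly at the block ends, these occurrences sit over the maxima
of the `xᵏ`. If `q > p`, two of them lie over the same block `xᵏ`, so some cut of the `·`-product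
falls inside that block with a maximum of `xᵏ` on each side. On the left of a `·`-cut every
non-maximal value is below every value on the right; as `f` is increasing on the block, the same
holds for `xᵏ`, which therefore splits as a `·`-product.
-/

open scoped TensorProduct

namespace SurjPerm

/-- The maximal value of a word (the `r` such that a surjection lands in `{1,…,r}`). -/
def rk (l : List ℕ) : ℕ := l.foldr max 0

/-- `l` is (the list of values of) a surjective map `{1,…,n} → {1,…,r}`
    with `n = l.length ≥ 1` and `r = rk l`. -/
def IsST (l : List ℕ) : Prop := l ≠ [] ∧ ∀ k, k ∈ l ↔ 1 ≤ k ∧ k ≤ rk l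

/-- membership in `ST_n^r`. -/
def memST (l : List ℕ) (n r : ℕ) : Prop := IsST l ∧ l.length = n ∧ rk l = r

/-- concatenation `x × y`. -/
def cat (x y : List ℕ) : List ℕ := x ++ y.map (· + rk x)

/-- iterated concatenation `x¹ × x² × … × xᵖ`. -/
def catAll (l : List (List ℕ)) : List ℕ := l.foldr cat []

/-- standardization of a word. -/
def stdList (l : List ℕ) : List ℕ := l.map fun v => (l.dedup.filter (· ≤ v)).length

/-- corestriction `x|^K`. -/
def corestrict (x : List ℕ) (K : Finset ℕ) : List ℕ := stdList (x.filter (· ∈ K))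

/-- the `i`-th entry of a word, `1`-indexed: `ent f i = f(i)`. -/
def ent (l : List ℕ) (i : ℕ) : ℕ := l.getD (i - 1) 0

/-- composition `f ∘ x` of the map (word) `f` with the map (word) `x`. -/
def wcomp (f x : List ℕ) : List ℕ := x.map fun v => ent f v

/-- the identity permutation `1_n` as a word. -/
def idW (n : ℕ) : List ℕ := (List.range n).map (· + 1)

/-- the permutation `ε(r₁,…,r_p)` as a word: the `i`-th block of positions
    carries the values shifted above all later blocks. -/
def epsW : List ℕ → List ℕ
  | [] => []
  | r :: rs => ((List.range r).map (· + rs.sum + 1)) ++ epsW rs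

/-- `x \ y := ε(r,s) ∘ (x × y)`. -/
def bsl (x y : List ℕ) : List ℕ := wcomp (epsW [rk x, rk y]) (cat x y)

/-- `f` is strictly increasing on each block of the composition `ns`. -/
def blockIncr (ns f : List ℕ) : Prop :=
  ∀ k, k < ns.length → ∀ i j, (ns.take k).sum < i → i < j → j ≤ (ns.take (k + 1)).sum →
    ent f i < ent f j

/-- `(n₁,…,n_p)`-stuffles. -/
def IsStuffle (ns f : List ℕ) : Prop := IsST f ∧ f.length = ns.sum ∧ blockIncr ns f

/-- `(n₁,…,n_p)`-shuffles: stuffles which are permutations. -/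
def IsShuffle (ns f : List ℕ) : Prop := IsStuffle ns f ∧ rk f = ns.sum

/-- irreducible surjections. -/
def Irr (l : List ℕ) : Prop := IsST l ∧ ¬ ∃ g h, IsST g ∧ IsST h ∧ l = cat g h

/-- the set of irreducible surjections of arity `n`. -/
def IrrN (n : ℕ) : Set (List ℕ) := {l | Irr l ∧ l.length = n}

/-- the product `x · y` on surjections. -/
def dotW (x y : List ℕ) : List ℕ :=
  x.map (fun v => if v < rk x then v else rk x + rk y - 1) ++
    y.map (fun v => if v < rk y then v + rk x - 1 else rk x + rk y - 1)

/-- iterated `·` product `x¹ · x² · … · xᵖ`. -/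
def dotAll : List (List ℕ) → List ℕ
  | [] => []
  | a :: as => as.foldl dotW a

/-- indecomposable surjections (for the `·` product). -/
def Indec (l : List ℕ) : Prop := IsST l ∧ ¬ ∃ a b, IsST a ∧ IsST b ∧ l = dotW a b

/-- the set `𝒟`. -/
def inD (x : List ℕ) : Prop :=
  IsST x ∧ ((x = [1] ∨ x = [1, 1]) ∨
    (3 ≤ x.length ∧ Irr x ∧
      ¬ ∃ y z, ∃ _ : y.length < x.length, inD y ∧ IsST z ∧ x = bsl y z))
termination_by x.length
decreasing_by assumption

/-- the set `𝒞`. -/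
def inC (x : List ℕ) : Prop :=
  Irr x ∧
    ((∃ y z, ∃ _ : y.length < x.length, Irr y ∧ ¬ inC y ∧ IsST z ∧ x = bsl y z) ∨
      (∃ a b, IsST a ∧ IsST b ∧ x = dotW a b))
termination_by x.length
decreasing_by assumption

/-- the set `𝔅(l)`, with `𝔅(0) = 𝒟`. -/
def inBfrak (l : ℕ) (x : List ℕ) : Prop :=
  if l = 0 then inD x else ∃ u v, inD u ∧ IsST v ∧ v.length = l ∧ x = bsl u v

/-- `t_i ∘ f`: exchange the values `i` and `i+1`. -/
def swapVal (i : ℕ) (l : List ℕ) : List ℕ :=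
  l.map fun v => if v = i then i + 1 else if v = i + 1 then i else v

/-- covering relation of the weak Bruhat order on `ST_n^r`:
    `f < t_i ∘ f` whenever `f⁻¹(i) < f⁻¹(i+1)`. -/
def wBCov (f g : List ℕ) : Prop :=
  ∃ i, 1 ≤ i ∧ i + 1 ≤ rk f ∧ g = swapVal i f ∧
    ∀ a b, a < f.length → b < f.length → f.getD a 0 = i → f.getD b 0 = i + 1 → a < b

/-- strict weak Bruhat order. -/
def wBlt : List ℕ → List ℕ → Prop := Relation.TransGen wBCov

/-- weak Bruhat order. -/
def wBle : List ℕ → List ℕ → Prop := Relation.ReflTransGen wBCov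

/-- the (0-indexed) positions `j₁-1 < … < j_λ-1` where the maximal value is attained. -/
def maxPos (x : List ℕ) : List ℕ :=
  (List.range x.length).filter fun i => x.getD i 0 = rk x

/-- `λ(x)`. -/
def lam (x : List ℕ) : ℕ := (maxPos x).length

/-- `𝕄(x) = (𝕄(x)_λ, …, 𝕄(x)₁)`. -/
def Mword (x : List ℕ) : List ℕ :=
  (List.zipWith (fun a b => b - a - 1) (maxPos x) ((maxPos x).drop 1) ++
    [x.length - (maxPos x).getLastD 0 - 1]).reverse

/-- the pieces `x|^{1..l₁}, x|^{l₁+1..l₂}, …, x|^{l_p+1..r}`. -/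
def pieces (x : List ℕ) (ls : List ℕ) : List (List ℕ) :=
  ((0 :: ls).zip (ls ++ [rk x])).map fun p => corestrict x (Finset.Icc (p.1 + 1) p.2)

/-- `x^{(l₁,…,l_p)}`. -/
def xfam (x : List ℕ) (ls : List ℕ) : List ℕ := catAll (pieces x ls)

variable (𝕂 : Type) [Field 𝕂]

/-- the vector space `𝕂[ST]` (with basis all words; only the basis elements in `ST` matter). -/
abbrev V := List ℕ →₀ 𝕂

/-- the coproduct `Δ`. -/
noncomputable def Delta : V 𝕂 →ₗ[𝕂] TensorProduct 𝕂 (V 𝕂) (V 𝕂) :=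
  Finsupp.lsum 𝕂 fun x => LinearMap.toSpanSingleton 𝕂 _
    (∑ i ∈ Finset.Ico 1 (rk x),
      Finsupp.single (corestrict x (Finset.Icc 1 i)) (1 : 𝕂) ⊗ₜ[𝕂]
        Finsupp.single (corestrict x (Finset.Icc (i + 1) (rk x))) (1 : 𝕂))

/-- the subspace `𝕂[ST_n]`. -/
noncomputable def STspanN (n : ℕ) : Submodule 𝕂 (V 𝕂) :=
  Submodule.span 𝕂 {v | ∃ l, IsST l ∧ l.length = n ∧ v = Finsupp.single l 1}

/-- `Prim(ST)_n = {v ∈ 𝕂[ST_n] : Δ v = 0}`. -/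
noncomputable def PrimN (n : ℕ) : Submodule 𝕂 (V 𝕂) :=
  STspanN 𝕂 n ⊓ LinearMap.ker (Delta 𝕂)

/-- the projection `E`. -/
noncomputable def Emap : V 𝕂 →ₗ[𝕂] V 𝕂 :=
  Finsupp.lsum 𝕂 fun x => LinearMap.toSpanSingleton 𝕂 _
    (∑ᶠ ls ∈ {ls : List ℕ | ls.Chain' (· < ·) ∧ ∀ l ∈ ls, 0 < l ∧ l < rk x},
      ((-1 : 𝕂) ^ ls.length) • Finsupp.single (xfam x ls) (1 : 𝕂))

/-- generic bilinear-on-basis operation indexed by a set of shuffles. -/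
noncomputable def shOp (P : ℕ → ℕ → List ℕ → Prop) (a b : V 𝕂) : V 𝕂 :=
  Finsupp.sum a fun x cx => Finsupp.sum b fun y cy =>
    (cx * cy) • ∑ᶠ f ∈ {f : List ℕ | IsShuffle [rk x, rk y] f ∧ P (rk x) (rk y) f},
      Finsupp.single (wcomp f (cat x y)) (1 : 𝕂)

/-- the dendriform operation `≻`. -/
noncomputable def succOp : V 𝕂 → V 𝕂 → V 𝕂 :=
  shOp 𝕂 fun r s f => ent f r < ent f (r + s)

/-- the dendriform operation `≺`. -/
noncomputable def precOp : V 𝕂 → V 𝕂 → V 𝕂 :=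
  shOp 𝕂 fun r s f => ent f (r + s) < ent f r

/-- `ω^≺(y₁,…,y_k) = y₁ ≺ (y₂ ≺ (… ≺ y_k))`. -/
noncomputable def omPrec : List (V 𝕂) → V 𝕂
  | [] => 0
  | [a] => a
  | a :: as => precOp 𝕂 a (omPrec as)

/-- `ω^≻(y₁,…,y_k) = ((y₁ ≻ y₂) ≻ …) ≻ y_k`. -/
noncomputable def omSucc : List (V 𝕂) → V 𝕂
  | [] => 0
  | a :: as => as.foldl (succOp 𝕂) a

/-- `ω^≺(l) ≻ x ≺ ω^≻(r)`, empty factors omitted. -/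
noncomputable def mterm (x : V 𝕂) : List (V 𝕂) → List (V 𝕂) → V 𝕂
  | [], [] => x
  | [], r => precOp 𝕂 x (omSucc 𝕂 r)
  | l, [] => succOp 𝕂 (omPrec 𝕂 l) x
  | l, r => precOp 𝕂 (succOp 𝕂 (omPrec 𝕂 l) x) (omSucc 𝕂 r)

/-- the brace operation `M^{ST}_{1k}(x; y₁,…,y_k)`. -/
noncomputable def braceM (x : V 𝕂) (ys : List (V 𝕂)) : V 𝕂 :=
  ∑ j ∈ Finset.range (ys.length + 1),
    ((-1 : 𝕂) ^ (ys.length - j)) • mterm 𝕂 x (ys.take j) (ys.drop j)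

/-- generic bilinear-on-basis operation indexed by a set of stuffles, with `q`-weights
    `q^{s(f) - c}` where `s(f) = |f| - rk f`. -/
noncomputable def stOp (q : 𝕂) (c : ℕ) (P : ℕ → ℕ → List ℕ → Prop) (a b : V 𝕂) : V 𝕂 :=
  Finsupp.sum a fun x cx => Finsupp.sum b fun y cy =>
    (cx * cy) • ∑ᶠ f ∈ {f : List ℕ | IsStuffle [rk x, rk y] f ∧ P (rk x) (rk y) f},
      q ^ (f.length - rk f - c) • Finsupp.single (wcomp f (cat x y)) (1 : 𝕂)

/-- `≻_q`. -/
noncomputable def succQ (q : 𝕂) : V 𝕂 → V 𝕂 → V 𝕂 :=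
  stOp 𝕂 q 0 fun r s f => ent f r < ent f (r + s)

/-- `≺_q`. -/
noncomputable def precQ (q : 𝕂) : V 𝕂 → V 𝕂 → V 𝕂 :=
  stOp 𝕂 q 0 fun r s f => ent f (r + s) < ent f r

/-- `·_q`. -/
noncomputable def dotQ (q : 𝕂) : V 𝕂 → V 𝕂 → V 𝕂 :=
  stOp 𝕂 q 1 fun r s f => ent f r = ent f (r + s)

/-- `≽_q = ≻_q + q ·_q`. -/
noncomputable def succcQ (q : 𝕂) (a b : V 𝕂) : V 𝕂 := succQ 𝕂 q a b + q • dotQ 𝕂 q a b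

/-- `ω^{≺_q}`. -/
noncomputable def omPrecQ (q : 𝕂) : List (V 𝕂) → V 𝕂
  | [] => 0
  | [a] => a
  | a :: as => precQ 𝕂 q a (omPrecQ q as)

/-- `ω^{≽_q}`. -/
noncomputable def omSucccQ (q : 𝕂) : List (V 𝕂) → V 𝕂
  | [] => 0
  | a :: as => as.foldl (succcQ 𝕂 q) a

/-- `ω^{≺_q}(l) ≽_q x ≺_q ω^{≽_q}(r)`, empty factors omitted. -/
noncomputable def mtermQ (q : 𝕂) (x : V 𝕂) : List (V 𝕂) → List (V 𝕂) → V 𝕂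
  | [], [] => x
  | [], r => precQ 𝕂 q x (omSucccQ 𝕂 q r)
  | l, [] => succcQ 𝕂 q (omPrecQ 𝕂 q l) x
  | l, r => precQ 𝕂 q (succcQ 𝕂 q (omPrecQ 𝕂 q l) x) (omSucccQ 𝕂 q r)

/-- the brace operation `M^{ST(q)}_{1k}`. -/
noncomputable def braceMQ (q : 𝕂) (x : V 𝕂) (ys : List (V 𝕂)) : V 𝕂 :=
  ∑ j ∈ Finset.range (ys.length + 1),
    ((-1 : 𝕂) ^ (ys.length - j)) • mtermQ 𝕂 q x (ys.take j) (ys.drop j)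

/-- the shuffle product of two basis elements. -/
noncomputable def shufSingle (x y : List ℕ) : V 𝕂 :=
  ∑ᶠ f ∈ {f : List ℕ | IsShuffle [rk x, rk y] f},
    Finsupp.single (wcomp f (cat x y)) (1 : 𝕂)

/-- the shuffle product `*` on `𝕂[ST]`, as a bilinear map. -/
noncomputable def shufL : V 𝕂 →ₗ[𝕂] V 𝕂 →ₗ[𝕂] V 𝕂 :=
  Finsupp.lsum 𝕂 fun x => LinearMap.toSpanSingleton 𝕂 _
    (Finsupp.lsum 𝕂 fun y => LinearMap.toSpanSingleton 𝕂 _ (shufSingle 𝕂 x y))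

/-- the augmented space `𝕂·1 ⊕ 𝕂[ST]`. -/
abbrev Vp := 𝕂 × V 𝕂

/-- inclusion `𝕂[ST] ↪ 𝕂·1 ⊕ 𝕂[ST]`. -/
noncomputable def inclV : V 𝕂 →ₗ[𝕂] Vp 𝕂 := LinearMap.inr 𝕂 𝕂 (V 𝕂)

/-- the unit `1`. -/
noncomputable def oneVp : Vp 𝕂 := (1, 0)

/-- the unital extension of the shuffle product to `𝕂·1 ⊕ 𝕂[ST]`, as a bilinear map:
    `(a + x)(b + y) = ab + (a y + b x + x * y)`.  In particular `1 * u = u = u * 1`. -/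
noncomputable def mulVp : Vp 𝕂 →ₗ[𝕂] Vp 𝕂 →ₗ[𝕂] Vp 𝕂 :=
  LinearMap.mk₂ 𝕂 (fun u v => (u.1 * v.1, u.1 • v.2 + v.1 • u.2 + shufL 𝕂 u.2 v.2))
    (fun u u' v => by
      refine Prod.ext ?_ ?_ <;>
        simp [add_mul, add_smul, smul_add, map_add, LinearMap.add_apply] <;> abel)
    (fun c u v => by
      refine Prod.ext ?_ ?_ <;>
        simp [mul_assoc, mul_smul, smul_add, smul_comm c v.1] <;> abel)
    (fun u v v' => by
      refine Prod.ext ?_ ?_ <;>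
        simp [mul_add, add_smul, smul_add, map_add, LinearMap.add_apply] <;> abel)
    (fun c u v => by
      refine Prod.ext ?_ ?_ <;>
        simp [mul_left_comm, mul_smul, smul_add, smul_comm c u.1] <;> abel)

/-- the extension `Δ⁺` of `Δ` to `𝕂·1 ⊕ 𝕂[ST]`, with `Δ⁺(1) = 1 ⊗ 1` and
    `Δ⁺(x) = x ⊗ 1 + 1 ⊗ x + Δ(x)` for `x ∈ 𝕂[ST]`. -/
noncomputable def DeltaP : Vp 𝕂 →ₗ[𝕂] TensorProduct 𝕂 (Vp 𝕂) (Vp 𝕂) :=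
  (LinearMap.toSpanSingleton 𝕂 _ (oneVp 𝕂 ⊗ₜ[𝕂] oneVp 𝕂)).comp (LinearMap.fst 𝕂 𝕂 (V 𝕂))
    + (((TensorProduct.mk 𝕂 (Vp 𝕂) (Vp 𝕂)).flip (oneVp 𝕂)).comp (inclV 𝕂)).comp
        (LinearMap.snd 𝕂 𝕂 (V 𝕂))
    + ((TensorProduct.mk 𝕂 (Vp 𝕂) (Vp 𝕂) (oneVp 𝕂)).comp (inclV 𝕂)).comp
        (LinearMap.snd 𝕂 𝕂 (V 𝕂))
    + ((TensorProduct.map (inclV 𝕂) (inclV 𝕂)).comp (Delta 𝕂)).comp (LinearMap.snd 𝕂 𝕂 (V 𝕂))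

/-- componentwise product on the tensor square: `(a⊗b)·(c⊗d) = (a·c)⊗(b·d)`. -/
noncomputable def mulTsq :
    TensorProduct 𝕂 (Vp 𝕂) (Vp 𝕂) →ₗ[𝕂]
      TensorProduct 𝕂 (Vp 𝕂) (Vp 𝕂) →ₗ[𝕂] TensorProduct 𝕂 (Vp 𝕂) (Vp 𝕂) :=
  TensorProduct.lift
    (((TensorProduct.mapBilinear (RingHom.id 𝕂) (Vp 𝕂) (Vp 𝕂) (Vp 𝕂) (Vp 𝕂)).comp (mulVp 𝕂)).compl₂
      (mulVp 𝕂))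

/-- concatenation on the right with a fixed word, linearized: `x ↦ x × y`. -/
noncomputable def catR (y : List ℕ) : V 𝕂 →ₗ[𝕂] V 𝕂 :=
  Finsupp.lsum 𝕂 fun x => LinearMap.toSpanSingleton 𝕂 _ (Finsupp.single (cat x y) (1 : 𝕂))

/-- concatenation on the left with a fixed word, linearized: `y ↦ x × y`. -/
noncomputable def catL (x : List ℕ) : V 𝕂 →ₗ[𝕂] V 𝕂 :=
  Finsupp.lsum 𝕂 fun y => LinearMap.toSpanSingleton 𝕂 _ (Finsupp.single (cat x y) (1 : 𝕂))

/-- `Sh^•(r₁,…,r_p)`: surjections onto `{1,…,R-p+1}` (where `R = r₁+…+r_p`), strictly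
    increasing on each block, attaining the maximal value exactly at the block ends, and whose
    corestriction to `{1,…,R-p}` is a `(r₁-1,…,r_p-1)`-shuffle. -/
def ShBull (rs : List ℕ) (f : List ℕ) : Prop :=
  memST f rs.sum (rs.sum - rs.length + 1) ∧ blockIncr rs f ∧
    (∀ i, 1 ≤ i → i ≤ rs.sum →
      (ent f i = rs.sum - rs.length + 1 ↔ ∃ k, k < rs.length ∧ i = (rs.take (k + 1)).sum)) ∧
    IsShuffle (rs.map (· - 1)) (corestrict f (Finset.Icc 1 (rs.sum - rs.length)))

end SurjPerm

theorem exists_block_of_lt {B : ℕ → ℕ} {i : ℕ} (h0 : B 0 ≤ i) :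
    ∀ {p}, i < B p → ∃ k < p, B k ≤ i ∧ i < B (k + 1)
  | 0, hp => absurd hp (by omega)
  | p + 1, hp => by
    by_cases hi : i < B p
    · obtain ⟨k, hk, h⟩ := exists_block_of_lt h0 hi
      exact ⟨k, by omega, h⟩
    · exact ⟨p, by omega, by omega, hp⟩

namespace List

variable {α : Type*}

theorem mem_extract_iff_getElem {l : List α} {a : α} {s t : ℕ} :
    a ∈ l.extract s t ↔ ∃ i, ∃ _ : i < l.length, s ≤ i ∧ i < t ∧ l[i] = a := by
  rw [extract_eq_take_drop, mem_take_iff_getElem]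
  constructor
  · rintro ⟨i, hi, rfl⟩
    simp only [length_drop, Nat.lt_min] at hi
    exact ⟨s + i, by omega, by omega, by omega, (getElem_drop ..).symm⟩
  · rintro ⟨i, hi, hsi, hit, rfl⟩
    exact ⟨i - s, by simp; omega, by simp only [getElem_drop]; congr; omega⟩

theorem lt_of_mem_extract {l : List α} {a : α} {s t : ℕ} (h : a ∈ l.extract s t) : s < t := by
  obtain ⟨i, -, hsi, hit, -⟩ := mem_extract_iff_getElem.1 h
  omega

theorem mem_take_of_mem_extract {l : List α} {a : α} {s t : ℕ} (h : a ∈ l.extract s t) :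
    a ∈ l.take t := by
  obtain ⟨i, hi, -, hit, rfl⟩ := mem_extract_iff_getElem.1 h
  exact mem_take_iff_getElem.2 ⟨i, by omega, rfl⟩

theorem mem_drop_of_mem_extract {l : List α} {a : α} {s t : ℕ} (h : a ∈ l.extract s t) :
    a ∈ l.drop s :=
  take_subset _ _ h

theorem take_extract_of_le {l : List α} {s n t : ℕ} (h : n ≤ t) :
    (l.extract s t).take (n - s) = l.extract s n := by
  rw [extract_eq_take_drop, take_take, Nat.min_eq_left (by omega), extract_eq_take_drop]

theorem drop_extract_of_le {l : List α} {s n t : ℕ} (h : s ≤ n) :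
    (l.extract s t).drop (n - s) = l.extract n t := by
  rw [extract_eq_take_drop, drop_take, drop_drop, extract_eq_take_drop, Nat.add_sub_cancel' h,
    Nat.sub_sub_sub_cancel_right h]

theorem extract_map {β : Type*} (f : α → β) (l : List α) (s t : ℕ) :
    (l.map f).extract s t = (l.extract s t).map f := by
  simp [map_drop, map_take]

theorem extract_add_add (l : List α) (n s t : ℕ) :
    l.extract (n + s) (n + t) = (l.drop n).extract s t := by
  simp [Nat.add_sub_add_left]

theorem map_eq_of_getD {β : Type*} {g : α → β} {l : List α} {l' : List β} [Inhabited α]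
    [Inhabited β] (hlen : l.length = l'.length)
    (h : ∀ i < l'.length, g (l.getD i default) = l'.getD i default) : l.map g = l' :=
  List.ext_getElem (by simp [hlen]) fun i _ hi => by
    rw [List.getElem_map, ← List.getD_eq_getElem _ default (by omega),
      ← List.getD_eq_getElem _ default hi]
    exact h i hi

/-- Pick an occurrence of `a` in each segment `[N j, N (j + 1))`; two of them lie in the same
block `[B k, B (k + 1))`, and the cut following the first of them splits that block. -/
theorem exists_cut_inside_block {l : List α} {a : α} {B N : ℕ → ℕ} {p q : ℕ}
    (hB0 : B 0 = 0) (hBp : l.length ≤ B p) (hN : Monotone N)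
    (ha : ∀ j < q, a ∈ l.extract (N j) (N (j + 1))) (hpq : p < q) :
    ∃ k < p, ∃ j, 0 < j ∧ j < q ∧ a ∈ l.extract (B k) (N j) ∧ a ∈ l.extract (N j) (B (k + 1)) := by
  choose! I hIl hNI hIN hIa using fun j hj => mem_extract_iff_getElem.1 (ha j hj)
  choose! K hKp hBK hKB using fun j (hj : j < q) =>
    exists_block_of_lt (B := B) (by rw [hB0]; exact Nat.zero_le (I j)) ((hIl j hj).trans_le hBp)
  obtain ⟨j₁, j₂, hne, hK⟩ := Fintype.exists_ne_map_eq_of_card_lt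
    (fun j : Fin q => (⟨K j, hKp j j.2⟩ : Fin p)) (by simpa using hpq)
  wlog hlt : j₁ < j₂ generalizing j₁ j₂
  · exact this j₂ j₁ hne.symm hK.symm (by omega)
  simp only [Fin.mk.injEq] at hK
  refine ⟨K j₁, hKp _ j₁.2, j₁ + 1, by omega, by omega, ?_, ?_⟩
  · exact mem_extract_iff_getElem.2 ⟨I j₁, hIl _ j₁.2, hBK _ j₁.2, hIN _ j₁.2, hIa _ j₁.2⟩
  · refine mem_extract_iff_getElem.2 ⟨I j₂, hIl _ j₂.2, ?_, hK ▸ hKB _ j₂.2, hIa _ j₂.2⟩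
    exact (hN (show (j₁ : ℕ) + 1 ≤ j₂ by omega)).trans (hNI _ j₂.2)

end List

namespace SurjPerm

theorem le_rk_of_mem {a : ℕ} {l : List ℕ} (h : a ∈ l) : a ≤ rk l :=
  List.le_max_of_le h le_rfl

theorem rk_le_iff {l : List ℕ} {m : ℕ} : rk l ≤ m ↔ ∀ a ∈ l, a ≤ m :=
  ⟨fun h _ ha => (le_rk_of_mem ha).trans h, List.max_le_of_forall_le l m⟩

theorem rk_eq_of_mem_iff {l : List ℕ} {r : ℕ} (hne : l ≠ [])
    (h : ∀ k, k ∈ l ↔ 1 ≤ k ∧ k ≤ r) : rk l = r := by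
  obtain ⟨a, ha⟩ := List.exists_mem_of_ne_nil l hne
  have ha' := (h a).1 ha
  exact le_antisymm (rk_le_iff.2 fun b hb => ((h b).1 hb).2)
    (le_rk_of_mem ((h r).2 ⟨by omega, le_rfl⟩))

theorem isST_of_mem_iff {l : List ℕ} {r : ℕ} (hne : l ≠ [])
    (h : ∀ k, k ∈ l ↔ 1 ≤ k ∧ k ≤ r) : IsST l :=
  ⟨hne, by rwa [rk_eq_of_mem_iff hne h]⟩

namespace IsST

variable {l : List ℕ}

theorem one_le_of_mem (h : IsST l) {a : ℕ} (ha : a ∈ l) : 1 ≤ a := ((h.2 a).1 ha).1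

theorem one_le_rk (h : IsST l) : 1 ≤ rk l := by
  obtain ⟨a, ha⟩ := List.exists_mem_of_ne_nil l h.1
  exact (h.one_le_of_mem ha).trans (le_rk_of_mem ha)

theorem rk_mem (h : IsST l) : rk l ∈ l := (h.2 (rk l)).2 ⟨h.one_le_rk, le_rfl⟩

theorem mem_of_le (h : IsST l) {k : ℕ} (h1 : 1 ≤ k) (h2 : k ≤ rk l) : k ∈ l := (h.2 k).2 ⟨h1, h2⟩

end IsST

section Dot

variable {x y : List ℕ}

theorem length_dotW : (dotW x y).length = x.length + y.length := by simp [dotW]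

theorem take_length_dotW :
    (dotW x y).take x.length = x.map fun v => if v < rk x then v else rk x + rk y - 1 :=
  List.take_left' (List.length_map _)

theorem drop_length_dotW :
    (dotW x y).drop x.length = y.map fun v => if v < rk y then v + rk x - 1 else rk x + rk y - 1 :=
  List.drop_left' (List.length_map _)

theorem mem_dotW_iff (hx : IsST x) (hy : IsST y) {k : ℕ} :
    k ∈ dotW x y ↔ 1 ≤ k ∧ k ≤ rk x + rk y - 1 := by
  have hrx := hx.one_le_rk
  have hry := hy.one_le_rk
  simp only [dotW, List.mem_append, List.mem_map]
  constructor
  · rintro (⟨v, hv, rfl⟩ | ⟨v, hv, rfl⟩)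
    · have := (hx.2 v).1 hv; split <;> omega
    · have := (hy.2 v).1 hv; split <;> omega
  · rintro ⟨h1, h2⟩
    by_cases hk : k < rk x
    · exact Or.inl ⟨k, hx.mem_of_le h1 hk.le, if_pos hk⟩
    by_cases hk' : k = rk x + rk y - 1
    · exact Or.inl ⟨rk x, hx.rk_mem, by simp [hk']⟩
    · refine Or.inr ⟨k + 1 - rk x, hy.mem_of_le (by omega) (by omega), ?_⟩
      rw [if_pos (by omega)]
      omega

theorem rk_dotW (hx : IsST x) (hy : IsST y) : rk (dotW x y) = rk x + rk y - 1 :=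
  rk_eq_of_mem_iff (by simp [dotW, hx.1]) fun _ => mem_dotW_iff hx hy

theorem isST_dotW (hx : IsST x) (hy : IsST y) : IsST (dotW x y) :=
  isST_of_mem_iff (by simp [dotW, hx.1]) fun _ => mem_dotW_iff hx hy

theorem dotW_assoc {z : List ℕ} (hx : IsST x) (hy : IsST y) (hz : IsST z) :
    dotW (dotW x y) z = dotW x (dotW y z) := by
  have hrx := hx.one_le_rk
  have hry := hy.one_le_rk
  have hrz := hz.one_le_rk
  rw [dotW.eq_1 (dotW x y), dotW.eq_1 x (dotW y z), rk_dotW hx hy, rk_dotW hy hz, dotW.eq_1 x,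
    dotW.eq_1 y]
  simp only [List.map_append, List.map_map, List.append_assoc]
  congr 1 <;> [skip; congr 1] <;> refine List.map_congr_left fun v hv => ?_
  · have := (hx.2 v).1 hv
    simp only [Function.comp_apply]
    split_ifs <;> omega
  · have := (hy.2 v).1 hv
    simp only [Function.comp_apply]
    split_ifs <;> omega
  · have := (hz.2 v).1 hv
    simp only [Function.comp_apply]
    split_ifs <;> omega

theorem lt_or_eq_rk_of_mem_take_dotW (hx : IsST x) (hy : IsST y) {w : ℕ}
    (hw : w ∈ (dotW x y).take x.length) : w < rk x ∨ w = rk (dotW x y) := by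
  rw [take_length_dotW, List.mem_map] at hw
  obtain ⟨v, -, rfl⟩ := hw
  rw [rk_dotW hx hy]
  split <;> simp_all

theorem le_of_mem_drop_dotW (hy : IsST y) {w : ℕ} (hw : w ∈ (dotW x y).drop x.length) :
    rk x ≤ w := by
  rw [drop_length_dotW, List.mem_map] at hw
  obtain ⟨v, hv, rfl⟩ := hw
  have := hy.one_le_of_mem hv
  have := hy.one_le_rk
  split <;> omega

end Dot

/-- The factors are the prefix with its maximum lowered to `c` and the suffix shifted down by
`c - 1`, where `c - 1` is the largest non-maximal value before the cut. -/
theorem exists_dotW_eq_of_split {x : List ℕ} (hx : IsST x) {m : ℕ}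
    (hl : rk x ∈ x.take m) (hr : rk x ∈ x.drop m)
    (hlt : ∀ v ∈ x.take m, ∀ w ∈ x.drop m, v ≠ rk x → v < w) :
    ∃ u v, IsST u ∧ IsST v ∧ x = dotW u v := by
  set r := rk x
  set c := rk ((x.take m).filter (· ≠ r)) + 1
  have hr1 : 1 ≤ r := hx.one_le_rk
  have hmem : ∀ {k}, k ∈ x → k ∈ x.take m ∨ k ∈ x.drop m := fun hk => by
    rwa [← List.take_append_drop m x, List.mem_append] at hk
  have hbound : ∀ {k}, k ∈ x → 1 ≤ k ∧ k ≤ r := fun hk => (hx.2 _).1 hk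
  have hpre : ∀ v ∈ x.take m, v < c ∨ v = r := fun v hv => by
    by_cases hvr : v = r
    · exact Or.inr hvr
    · exact Or.inl (Nat.lt_succ_of_le (le_rk_of_mem (List.mem_filter.2 ⟨hv, by simpa⟩)))
  have hsuf : ∀ w ∈ x.drop m, c ≤ w ∧ w ≤ r := fun w hw => by
    have hw1 := hbound (List.mem_of_mem_drop hw)
    refine ⟨Nat.succ_le_of_lt (Nat.lt_of_le_pred hw1.1 (rk_le_iff.2 fun v hv => ?_)), hw1.2⟩
    obtain ⟨hv, hvr⟩ := List.mem_filter.1 hv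
    exact Nat.le_pred_of_lt (hlt v hv w hw (by simpa using hvr))
  have hcr : c ≤ r := (hsuf r hr).1
  set u := (x.take m).map (min · c)
  set v := (x.drop m).map (· + 1 - c)
  have hu : ∀ k, k ∈ u ↔ 1 ≤ k ∧ k ≤ c := fun k => by
    simp only [u, List.mem_map]
    constructor
    · rintro ⟨w, hw, rfl⟩
      have := hbound (List.mem_of_mem_take hw)
      omega
    · rintro ⟨hk1, hkc⟩
      rcases Nat.lt_or_eq_of_le hkc with hkc | rfl
      · rcases hmem (hx.mem_of_le hk1 (by omega)) with hk | hk
        · exact ⟨k, hk, by omega⟩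
        · exact absurd (hsuf k hk).1 (by omega)
      · exact ⟨r, hl, by omega⟩
  have hv : ∀ k, k ∈ v ↔ 1 ≤ k ∧ k ≤ r + 1 - c := fun k => by
    simp only [v, List.mem_map]
    constructor
    · rintro ⟨w, hw, rfl⟩
      have := hsuf w hw
      omega
    · rintro ⟨hk1, hkr⟩
      rcases hmem (hx.mem_of_le (k := k + c - 1) (by omega) (by omega)) with hk | hk
      · rcases hpre _ hk with h | h
        · omega
        · exact ⟨r, hr, by omega⟩
      · exact ⟨_, hk, by omega⟩
  have hune : u ≠ [] := List.ne_nil_of_mem ((hu c).2 ⟨by omega, le_rfl⟩)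
  have hvne : v ≠ [] := List.ne_nil_of_mem ((hv 1).2 ⟨le_rfl, by omega⟩)
  refine ⟨u, v, isST_of_mem_iff hune hu, isST_of_mem_iff hvne hv, ?_⟩
  rw [dotW, rk_eq_of_mem_iff hune hu, rk_eq_of_mem_iff hvne hv, List.map_map, List.map_map]
  conv_lhs => rw [← List.take_append_drop m x, ← List.map_id (x.take m), ← List.map_id (x.drop m)]
  congr 1 <;> refine List.map_congr_left fun w hw => ?_ <;> simp only [id, Function.comp_apply]
  · rcases hpre w hw with h | h <;> split_ifs <;> omega
  · have := hsuf w hw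
    split_ifs <;> omega

theorem exists_dotW_eq_of_cut_inside_block {x z : List ℕ} (hx : IsST x) {g : ℕ → ℕ}
    {a s n t : ℕ} (hg : MonotoneOn g (Set.Icc 1 (rk x))) (hgM : ∀ w ∈ x, g w = rk z → w = rk x)
    (hblock : z.extract s t = x.map g)
    (hpre : ∀ w ∈ z.take n, w < a ∨ w = rk z) (hsuf : ∀ w ∈ z.drop n, a ≤ w)
    (hMl : rk z ∈ z.extract s n) (hMr : rk z ∈ z.extract n t) :
    ∃ u v, IsST u ∧ IsST v ∧ x = dotW u v := by
  have hleft : (x.take (n - s)).map g = z.extract s n := by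
    rw [List.map_take, ← hblock, List.take_extract_of_le (List.lt_of_mem_extract hMr).le]
  have hright : (x.drop (n - s)).map g = z.extract n t := by
    rw [List.map_drop, ← hblock, List.drop_extract_of_le (List.lt_of_mem_extract hMl).le]
  have hmax : ∀ {l}, l ⊆ x → rk z ∈ l.map g → rk x ∈ l := fun hl hM => by
    obtain ⟨w, hw, hwM⟩ := List.mem_map.1 hM
    rwa [← hgM w (hl hw) hwM]
  refine exists_dotW_eq_of_split hx (hmax (List.take_subset _ x) (hleft ▸ hMl))
    (hmax (List.drop_subset _ x) (hright ▸ hMr)) fun v hv w hw hvr => ?_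
  have hgv : g v < a := by
    refine (hpre _ (List.mem_take_of_mem_extract (hleft ▸ List.mem_map_of_mem hv))).resolve_right
      fun h => hvr (hgM v (List.mem_of_mem_take hv) h)
  have hgw : a ≤ g w := hsuf _ (List.mem_drop_of_mem_extract (hright ▸ List.mem_map_of_mem hw))
  by_contra! hwv
  have := hg ((hx.2 w).1 (List.mem_of_mem_drop hw)) ((hx.2 v).1 (List.mem_of_mem_take hv)) hwv
  omega

def blockStart {α : Type*} (xs : List (List α)) (k : ℕ) : ℕ := ((xs.take k).map List.length).sum

@[simp]
theorem blockStart_zero {α : Type*} (xs : List (List α)) : blockStart xs 0 = 0 := rfl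

@[simp]
theorem blockStart_cons_succ {α : Type*} (x : List α) (xs : List (List α)) (k : ℕ) :
    blockStart (x :: xs) (k + 1) = x.length + blockStart xs k := by
  simp [blockStart]

theorem blockStart_mono {α : Type*} (xs : List (List α)) : Monotone (blockStart xs) :=
  fun _ _ h => by simpa only [blockStart, List.map_take] using List.monotone_sum_take _ h

section DotAll

variable {ys : List (List ℕ)}

theorem isST_foldl_dotW {a : List ℕ} (ha : IsST a) (hys : ∀ y ∈ ys, IsST y) :
    IsST (ys.foldl dotW a) := by
  induction ys generalizing a with
  | nil => exact ha
  | cons y ys ih =>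
    exact ih (isST_dotW ha (hys y (by simp))) fun z hz => hys z (by simp [hz])

theorem isST_dotAll (hne : ys ≠ []) (hys : ∀ y ∈ ys, IsST y) : IsST (dotAll ys) := by
  obtain ⟨y, ys, rfl⟩ := List.exists_cons_of_ne_nil hne
  exact isST_foldl_dotW (hys y (by simp)) fun z hz => hys z (by simp [hz])

theorem length_foldl_dotW (a : List ℕ) :
    (ys.foldl dotW a).length = a.length + (ys.map List.length).sum := by
  induction ys generalizing a with
  | nil => simp
  | cons y ys ih => simp [ih, length_dotW, Nat.add_assoc]

theorem length_dotAll : (dotAll ys).length = (ys.map List.length).sum := by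
  cases ys with
  | nil => rfl
  | cons y ys => simp [dotAll, length_foldl_dotW]

theorem foldl_dotW_eq {a : List ℕ} (ha : IsST a) (hne : ys ≠ []) (hys : ∀ y ∈ ys, IsST y) :
    ys.foldl dotW a = dotW a (dotAll ys) := by
  induction ys generalizing a with
  | nil => exact absurd rfl hne
  | cons y ys ih =>
    have hy := hys y (by simp)
    have hys' : ∀ z ∈ ys, IsST z := fun z hz => hys z (by simp [hz])
    rcases eq_or_ne ys [] with rfl | hne'
    · rfl
    · rw [List.foldl_cons, ih (isST_dotW ha hy) hne' hys', dotW_assoc ha hy (isST_dotAll hne' hys'),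
        dotAll, ih hy hne' hys']

theorem dotAll_append {us : List (List ℕ)} (hus : us ≠ []) (hne : ys ≠ [])
    (hST : ∀ y ∈ us ++ ys, IsST y) : dotAll (us ++ ys) = dotW (dotAll us) (dotAll ys) := by
  obtain ⟨u, us, rfl⟩ := List.exists_cons_of_ne_nil hus
  rw [List.cons_append, dotAll, List.foldl_append, foldl_dotW_eq _ hne]
  · rfl
  · exact fun y hy => hST y (by simp [hy])
  · exact isST_foldl_dotW (hST u (by simp)) fun y hy => hST y (by simp [hy])

theorem rk_dotAll_mem_extract (hys : ∀ y ∈ ys, IsST y) {j : ℕ} (hj : j < ys.length) :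
    rk (dotAll ys) ∈ (dotAll ys).extract (blockStart ys j) (blockStart ys (j + 1)) := by
  induction ys generalizing j with
  | nil => simp at hj
  | cons y ys ih =>
    have hy := hys y (by simp)
    have hys' : ∀ z ∈ ys, IsST z := fun z hz => hys z (by simp [hz])
    rcases eq_or_ne ys [] with rfl | hne
    · obtain rfl : j = 0 := by simpa using hj
      simpa [blockStart, dotAll] using hy.rk_mem
    have hZ := isST_dotAll hne hys'
    rw [show dotAll (y :: ys) = dotW y (dotAll ys) from foldl_dotW_eq hy hne hys']
    cases j with
    | zero =>
      have : rk (dotW y (dotAll ys)) ∈ (dotW y (dotAll ys)).take y.length := by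
        rw [take_length_dotW, rk_dotW hy hZ]
        exact List.mem_map.2 ⟨rk y, hy.rk_mem, by simp⟩
      simpa [blockStart] using this
    | succ j =>
      rw [blockStart_cons_succ, blockStart_cons_succ, List.extract_add_add, drop_length_dotW,
        List.extract_map, rk_dotW hy hZ]
      exact List.mem_map.2 ⟨_, ih hys' (by simpa using hj), by simp⟩

theorem exists_cut_dotAll (hys : ∀ y ∈ ys, IsST y) {j : ℕ} (hj0 : 0 < j)
    (hjq : j < ys.length) :
    ∃ a, (∀ w ∈ (dotAll ys).take (blockStart ys j), w < a ∨ w = rk (dotAll ys)) ∧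
      ∀ w ∈ (dotAll ys).drop (blockStart ys j), a ≤ w := by
  have htake : ys.take j ≠ [] := List.ne_nil_of_length_pos (by simp; omega)
  have hdrop : ys.drop j ≠ [] := by simp; omega
  have hA := isST_dotAll htake fun y hy => hys y (List.mem_of_mem_take hy)
  have hC := isST_dotAll hdrop fun y hy => hys y (List.mem_of_mem_drop hy)
  have hsplit : dotAll ys = dotW (dotAll (ys.take j)) (dotAll (ys.drop j)) := by
    conv_lhs => rw [← List.take_append_drop j ys]
    exact dotAll_append htake hdrop (by rwa [List.take_append_drop])
  have hlen : blockStart ys j = (dotAll (ys.take j)).length := by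
    rw [length_dotAll, blockStart]
  rw [hlen, hsplit]
  exact ⟨_, fun _ hw => lt_or_eq_rk_of_mem_take_dotW hA hC hw,
    fun _ hw => le_of_mem_drop_dotW hC hw⟩

end DotAll

theorem length_catAll (xs : List (List ℕ)) : (catAll xs).length = blockStart xs xs.length := by
  induction xs with
  | nil => rfl
  | cons x xs ih => simp [catAll, cat, ← ih]

theorem extract_catAll {xs : List (List ℕ)} {k : ℕ} (hk : k < xs.length) :
    (catAll xs).extract (blockStart xs k) (blockStart xs (k + 1)) =
      (xs.getD k []).map (· + ((xs.take k).map rk).sum) := by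
  induction xs generalizing k with
  | nil => simp at hk
  | cons x xs ih =>
    have hcat : catAll (x :: xs) = x ++ (catAll xs).map (· + rk x) := rfl
    cases k with
    | zero => simp [hcat]
    | succ k =>
      rw [blockStart_cons_succ, blockStart_cons_succ, List.extract_add_add, hcat,
        List.drop_left, List.extract_map, ih (by simpa using hk)]
      simp only [List.map_map, List.getD_cons_succ, List.take_succ_cons, List.map_cons,
        List.sum_cons]
      congr 1
      funext v
      simp only [Function.comp_apply]
      omega

theorem extract_wcomp_catAll (f : List ℕ) {xs : List (List ℕ)} {k : ℕ} (hk : k < xs.length) :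
    (wcomp f (catAll xs)).extract (blockStart xs k) (blockStart xs (k + 1)) =
      (xs.getD k []).map fun v => ent f (v + ((xs.take k).map rk).sum) := by
  rw [wcomp, List.extract_map, extract_catAll hk, List.map_map]
  rfl

theorem ent_le_rk (f : List ℕ) (v : ℕ) : ent f v ≤ rk f := by
  rw [ent, List.getD_eq_getElem?_getD]
  cases h : f[v - 1]? with
  | none => exact Nat.zero_le _
  | some a => exact le_rk_of_mem (List.mem_of_getElem? h)

theorem rk_wcomp_le (f w : List ℕ) : rk (wcomp f w) ≤ rk f :=
  rk_le_iff.2 fun _ h => by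
    obtain ⟨v, -, rfl⟩ := List.mem_map.1 h
    exact ent_le_rk f v

namespace ShBull

variable {rs f : List ℕ} {k : ℕ}

theorem strictMonoOn_block (hf : ShBull rs f) (hk : k < rs.length) :
    StrictMonoOn (fun v => ent f (v + (rs.take k).sum)) (Set.Icc 1 (rs.getD k 0)) := by
  intro v hv w hw hvw
  have hS : (rs.take (k + 1)).sum = (rs.take k).sum + rs.getD k 0 := by
    rw [List.sum_take_succ _ _ hk, List.getD_eq_getElem _ _ hk]
  exact hf.2.1 k hk _ _ (by simp only [Set.mem_Icc] at hv; omega) (by omega)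
    (by simp only [Set.mem_Icc] at hw; omega)

theorem ent_eq_iff (hf : ShBull rs f) (hk : k < rs.length) {w : ℕ}
    (hw : w ∈ Set.Icc 1 (rs.getD k 0)) :
    ent f (w + (rs.take k).sum) = rs.sum - rs.length + 1 ↔ w = rs.getD k 0 := by
  obtain ⟨hw1, hwr⟩ := hw
  have hS : ∀ {l}, l < rs.length → (rs.take (l + 1)).sum = (rs.take l).sum + rs.getD l 0 :=
    fun hl => by rw [List.sum_take_succ _ _ hl, List.getD_eq_getElem _ _ hl]
  have hmono : ∀ {a b}, a ≤ b → (rs.take a).sum ≤ (rs.take b).sum :=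
    fun h => List.monotone_sum_take rs h
  have hle : w + (rs.take k).sum ≤ rs.sum := by
    have := hmono (show k + 1 ≤ rs.length by omega)
    rw [hS hk, List.take_length] at this
    omega
  rw [hf.2.2.1 _ (by omega) hle]
  constructor
  · rintro ⟨l, hl, hwl⟩
    rcases Nat.lt_or_ge l k with hlk | hlk
    · have := hmono (show l + 1 ≤ k by omega)
      omega
    · have := hmono (show k + 1 ≤ l + 1 by omega)
      rw [hS hk] at this
      omega
  · rintro rfl
    exact ⟨k, hk, by rw [hS hk, Nat.add_comm]⟩

end ShBull

theorem statement_19_general (rs : List ℕ)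
    (xs : List (List ℕ)) (hlen : xs.length = rs.length)
    (hx : ∀ i, i < rs.length →
      Indec (xs.getD i []) ∧ rk (xs.getD i []) = rs.getD i 0)
    (f : List ℕ) (hf : ShBull rs f)
    (ys : List (List ℕ)) (hysST : ∀ z ∈ ys, IsST z)
    (heq : wcomp f (catAll xs) = dotAll ys) :
    ys.length ≤ xs.length := by
  by_contra! hpq
  set z := dotAll ys
  obtain ⟨k, hk, j, hj0, hjq, hMl, hMr⟩ := List.exists_cut_inside_block (l := z) (a := rk z)
    (B := blockStart xs) (N := blockStart ys) rfl
    (by rw [← heq, wcomp, List.length_map, length_catAll]) (blockStart_mono ys)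
    (fun j hj => rk_dotAll_mem_extract hysST hj) hpq
  obtain ⟨a, hpre, hsuf⟩ := exists_cut_dotAll hysST hj0 hjq
  have hk' : k < rs.length := hlen ▸ hk
  obtain ⟨⟨hxST, hxdec⟩, hxrk⟩ := hx k hk'
  have hblock := extract_wcomp_catAll f hk
  rw [heq, List.map_take, List.map_eq_of_getD hlen fun i hi => (hx i hi).2] at hblock
  have hgx : ∀ w ∈ xs.getD k [], w ∈ Set.Icc 1 (rs.getD k 0) := fun w hw => hxrk ▸ (hxST.2 w).1 hw
  -- `z` attains the maximal value of `f`, at the end of the block of `xᵏ`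
  have hM : rk z = rs.sum - rs.length + 1 := by
    refine le_antisymm (heq ▸ hf.1.2.2 ▸ rk_wcomp_le f _) (le_rk_of_mem ?_)
    rw [← (hf.ent_eq_iff hk' (hgx _ hxST.rk_mem)).2 hxrk]
    exact List.mem_of_mem_drop <| List.mem_drop_of_mem_extract <|
      hblock ▸ List.mem_map_of_mem (f := fun v => ent f (v + (rs.take k).sum)) hxST.rk_mem
  exact hxdec (exists_dotW_eq_of_cut_inside_block hxST
    (hxrk ▸ (hf.strictMonoOn_block hk').monotoneOn)
    (fun w hw hwM => hxrk ▸ (hf.ent_eq_iff hk' (hgx w hw)).1 (hM ▸ hwM)) hblock hpre hsuf hMl hMr)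

/-- if the `xⁱ ∈ ST_{n_i}^{r_i}` are indecomposable, `f ∈ Sh^•(r₁,…,r_p)` and
`f∘(x¹×…×xᵖ) = y¹·y²·…·y^q` for surjections `yʲ`, then `q ≤ p`. -/
theorem statement_19 (rs : List ℕ) (hne : rs ≠ []) (hpos : ∀ r ∈ rs, 1 ≤ r)
    (xs : List (List ℕ)) (hlen : xs.length = rs.length)
    (hx : ∀ i, i < rs.length →
      Indec (xs.getD i []) ∧ rk (xs.getD i []) = rs.getD i 0)
    (f : List ℕ) (hf : ShBull rs f)
    (ys : List (List ℕ)) (hys : ys ≠ []) (hysST : ∀ z ∈ ys, IsST z)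
    (heq : wcomp f (catAll xs) = dotAll ys) :
    ys.length ≤ xs.length :=
  statement_19_general rs xs hlen hx f hf ys hysST heq

end SurjPerm
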